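/- arXiv:2004.01182 — 5 statements merged into one kernel-verified Lean document; each statement's English description precedes it below -/
import Mathlib

section
/- Suppose in addition that 𝒲 has dimension at most D for some D ∈ ℕ. Let V ⊆ 𝒲 be a UBS, and suppose V is almost-equivalent to a disjoint union ⋃_{i∈I} U_i of pairwise disjoint minimal UBSs and also almost-equivalent to a disjoint union ⋃_{i∈I'} U'_i of pairwise disjoint minimal UBSs. Then I and I' are finite of the same cardinality, and there is a bijection σ : I → I' such that U_i and U'_{σ(i)} are almost-equivalent for every i ∈ I. -/
open Set

variable {X : Type*}

/-- A wall: a subset with nonempty complement and nonempty itself. -/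
def IsWall (h : Set X) : Prop := h.Nonempty ∧ hᶜ.Nonempty

/-- Walls `h` and `k` cross. -/
def Crosses (h k : Set X) : Prop :=
  (h ∩ k).Nonempty ∧ (h ∩ kᶜ).Nonempty ∧ (hᶜ ∩ k).Nonempty ∧ (hᶜ ∩ kᶜ).Nonempty

/-- The wall `u` lies in the halfspace `H` of the wall `w`. -/
def LiesIn (u H w : Set X) : Prop := u ≠ w ∧ (u ⊆ H ∨ uᶜ ⊆ H)

/-- The wall `w` separates the walls `u` and `v`. -/
def Separates (w u v : Set X) : Prop :=
  u ≠ v ∧ u ≠ w ∧ v ≠ w ∧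
  ∃ u' v' w', (u' = u ∨ u' = uᶜ) ∧ (v' = v ∨ v' = vᶜ) ∧ (w' = w ∨ w' = wᶜ) ∧
    u' ⊆ w' ∧ v' ⊆ w'ᶜ

/-- `S` contains a facing triple. -/
def HasFacingTriple (S : Set (Set X)) : Prop :=
  ∃ a ∈ S, ∃ b ∈ S, ∃ c ∈ S, a ≠ b ∧ a ≠ c ∧ b ≠ c ∧
    ∃ a' b' c', (a' = a ∨ a' = aᶜ) ∧ (b' = b ∨ b' = bᶜ) ∧ (c' = c ∨ c' = cᶜ) ∧
      Disjoint a' b' ∧ Disjoint a' c' ∧ Disjoint b' c'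

/-- `S` is inseparable with respect to the wall collection `W`. -/
def InseparableIn (W S : Set (Set X)) : Prop :=
  ∀ u ∈ S, ∀ v ∈ S, ∀ w ∈ W, Separates w u v → w ∈ S

/-- `S` is unidirectional: for each wall `w ∈ S`, at most one of the two halfspaces of `w`
contains infinitely many walls of `S`. -/
def Unidirectional (S : Set (Set X)) : Prop :=
  ∀ w ∈ S, {u ∈ S | LiesIn u w w}.Finite ∨ {u ∈ S | LiesIn u wᶜ w}.Finite

/-- `V` is a UBS in the wall collection `W`. -/
def IsUBS (W V : Set (Set X)) : Prop :=
  V ⊆ W ∧ V.Infinite ∧ InseparableIn W V ∧ Unidirectional V ∧ ¬ HasFacingTriple V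

/-- Almost-equivalence of sets of walls. -/
def AlmostEq (S T : Set (Set X)) : Prop := (S \ T).Finite ∧ (T \ S).Finite

/-- `U` is a minimal UBS in `W`. -/
def MinUBS (W U : Set (Set X)) : Prop :=
  IsUBS W U ∧ ∀ U', IsUBS W U' → U' ⊆ U → AlmostEq U' U

/-- `A ≺ B`: every wall of `B` crosses all but finitely many walls of `A`. -/
def Prec (A B : Set (Set X)) : Prop := ∀ b ∈ B, {a ∈ A | ¬ Crosses b a}.Finite

/-- Distinct members of `W` determine distinct partitions. -/
def Admissible (W : Set (Set X)) : Prop := ∀ h ∈ W, ∀ k ∈ W, h ≠ k → h ≠ kᶜ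

/-- No infinite subset of `W` consists of pairwise-crossing walls. -/
def NoInfCross (W : Set (Set X)) : Prop := ∀ S ⊆ W, S.Pairwise Crosses → S.Finite

/-- `W` has dimension at most `D`: every pairwise-crossing subset has cardinality at most `D`. -/
def DimLE (W : Set (Set X)) (D : ℕ) : Prop :=
  ∀ S ⊆ W, S.Pairwise Crosses → S.Finite ∧ S.ncard ≤ D

/-- `c` is a chain: an injective sequence of walls with `c n` separating `c (n-1)` and
`c (n+1)` for `n ≥ 1`. -/
def IsChainSeq (c : ℕ → Set X) : Prop :=
  Function.Injective c ∧ ∀ n, Separates (c (n + 1)) (c n) (c (n + 2))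

/-- The chain `c` is inextensible in `S`: no wall of `S` has a halfspace containing every
term of `c`. -/
def InextensibleIn (S : Set (Set X)) (c : ℕ → Set X) : Prop :=
  ¬ ∃ w ∈ S, ∃ H, (H = w ∨ H = wᶜ) ∧ ∀ n, LiesIn (c n) H w

/-- The inseparable closure in `W` of a set `C` of walls. -/
def insepClosure (W C : Set (Set X)) : Set (Set X) :=
  ⋂₀ {S | C ⊆ S ∧ S ⊆ W ∧ InseparableIn W S}


/-
A minimal UBS `U i` meets some `U' j` in an infinite set, and minimality then makes the two
almost-equivalent; since the `U i` (and the `U' j`) are disjoint, this matching is a bijection.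
The substance is that a UBS `V` contains only finitely many pairwise disjoint infinite inseparable
sets when the dimension is finite. Each of them contains a nested sequence of halfspaces. For two
such sequences, unidirectionality and inseparability leave three possibilities: their complements
are disjoint, or late walls of one cross almost all walls of the other, in one of the two orders.
By Ramsey's theorem, infinitely many sequences would give either a facing triple in `V` or, by a
greedy choice, `D + 1` pairwise crossing walls.
-/

open Filter Function

theorem exists_strictMono_forall_lt_of_finite_cover {γ : Type*} [Finite γ]
    (P : γ → ℕ → ℕ → Prop) (hP : ∀ i j, i < j → ∃ k, P k i j) :
    ∃ t : ℕ → ℕ, StrictMono t ∧ ∃ k, ∀ i j, i < j → P k (t i) (t j) := by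
  -- Each `i` sees a single colour `col i` on a `𝒰`-large set of `j`; the terms are then picked
  -- greedily from `𝒰`-large sets on which every earlier term sees the colour `k`.
  let 𝒰 := hyperfilter ℕ
  have h𝒰 : ∀ i, ∀ᶠ j in (𝒰 : Filter ℕ), i < j :=
    fun i => Nat.hyperfilter_le_atTop (eventually_gt_atTop i)
  choose col hcol using fun i => Ultrafilter.eventually_exists_iff.1 ((h𝒰 i).mono (hP i))
  obtain ⟨k, hk⟩ : ∃ k, ∀ᶠ i in (𝒰 : Filter ℕ), col i = k :=
    Ultrafilter.eventually_exists_iff.1 (.of_forall fun i => ⟨col i, rfl⟩)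
  let pick : Set ℕ → ℕ := fun s => Classical.epsilon (· ∈ s)
  let G : ℕ → Set ℕ := fun n =>
    n.rec {i | col i = k} fun _ s => s ∩ {j | pick s < j ∧ P k (pick s) j}
  have hG_anti : Antitone G := antitone_nat_of_succ_le fun _ => inter_subset_left
  have hG : ∀ n, G n ∈ 𝒰 ∧ pick (G n) ∈ G n := by
    intro n
    induction n with
    | zero => exact ⟨hk, Classical.epsilon_spec (Ultrafilter.nonempty_of_mem hk)⟩
    | succ n ih =>
      have hpick : ∀ᶠ j in (𝒰 : Filter ℕ), P k (pick (G n)) j := by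
        rw [← show col (pick (G n)) = k from hG_anti (Nat.zero_le n) ih.2]
        exact hcol _
      have hmem : G (n + 1) ∈ 𝒰 := inter_mem ih.1 ((h𝒰 _).and hpick)
      exact ⟨hmem, Classical.epsilon_spec (Ultrafilter.nonempty_of_mem hmem)⟩
  refine ⟨fun n => pick (G n), strictMono_nat_of_lt_succ fun n => (hG (n + 1)).2.2.1, k,
    fun i j hij => (hG_anti (Nat.succ_le_of_lt hij) (hG j).2).2.2⟩

theorem Crosses.symm {u v : Set X} (h : Crosses u v) : Crosses v u := by
  obtain ⟨h1, h2, h3, h4⟩ := h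
  exact ⟨inter_comm u v ▸ h1, inter_comm uᶜ v ▸ h3, inter_comm u vᶜ ▸ h2, inter_comm uᶜ vᶜ ▸ h4⟩

theorem Crosses.ne {u v : Set X} (h : Crosses u v) : u ≠ v := by
  rintro rfl
  simpa using h.2.1

theorem crosses_compl_left {u v : Set X} : Crosses uᶜ v ↔ Crosses u v := by
  simp only [Crosses, compl_compl]
  tauto

theorem crosses_compl_right {u v : Set X} : Crosses u vᶜ ↔ Crosses u v := by
  simp only [Crosses, compl_compl]
  tauto

theorem crosses_iff_of_eq_or_eq_compl {u v H K : Set X} (hH : H = u ∨ H = uᶜ)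
    (hK : K = v ∨ K = vᶜ) : Crosses H K ↔ Crosses u v := by
  rcases hH with rfl | rfl <;> rcases hK with rfl | rfl <;>
    simp only [crosses_compl_left, crosses_compl_right]

theorem not_crosses_iff {u v : Set X} :
    ¬ Crosses u v ↔ Disjoint u v ∨ u ⊆ v ∨ v ⊆ u ∨ Disjoint uᶜ vᶜ := by
  simp only [Crosses, not_and_or, not_nonempty_iff_eq_empty, ← disjoint_iff_inter_eq_empty,
    ← subset_compl_iff_disjoint_right, compl_compl, compl_subset_compl]

def halfspace : Bool → Set X → Set X
  | true, w => w
  | false, w => wᶜ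

theorem halfspace_eq_or (b : Bool) (w : Set X) : halfspace b w = w ∨ halfspace b w = wᶜ := by
  cases b <;> simp [halfspace]

theorem compl_halfspace (b : Bool) (w : Set X) : (halfspace b w)ᶜ = halfspace (!b) w := by
  cases b <;> simp [halfspace]

theorem not_crosses_iff_exists_disjoint {u v : Set X} :
    ¬ Crosses u v ↔ ∃ a b, Disjoint (halfspace a u) (halfspace b v) := by
  simp only [Crosses, not_and_or, not_nonempty_iff_eq_empty, ← disjoint_iff_inter_eq_empty,
    Bool.exists_bool, halfspace]
  tauto

theorem pairwise_crosses_of_lt {u : ℕ → Set X} (h : ∀ i j, i < j → Crosses (u i) (u j)) :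
    Pairwise (Crosses on u) :=
  fun i j hij => hij.lt_or_gt.elim (h i j) fun hji => (h j i hji).symm

theorem DimLE.noInfCross {W : Set (Set X)} {D : ℕ} (hdim : DimLE W D) : NoInfCross W :=
  fun S hS hcross => (hdim S hS hcross).1

theorem DimLE.not_forall_crosses {W : Set (Set X)} {D : ℕ} (hdim : DimLE W D) {u : ℕ → Set X}
    (huW : ∀ a, u a ∈ W) : ¬ ∀ a b, a < b → b < D + 1 → Crosses (u a) (u b) := by
  intro h
  have hcross : (Iio (D + 1)).Pairwise (Crosses on u) := fun a ha b hb hab =>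
    hab.lt_or_gt.elim (fun hlt => h a b hlt hb) fun hgt => (h b a hgt ha).symm
  have hinj : InjOn u (Iio (D + 1)) := fun a ha b hb hab => by
    by_contra hne
    exact (hcross ha hb hne).ne hab
  have hcard := (hdim (u '' Iio (D + 1)) (image_subset_iff.2 fun a _ => huW a) hcross.image).2
  rw [hinj.ncard_image, ncard_Iio_nat] at hcard
  omega

theorem HasFacingTriple.mono {S T : Set (Set X)} (h : HasFacingTriple S) (hST : S ⊆ T) :
    HasFacingTriple T := by
  obtain ⟨a, ha, b, hb, c, hc, rest⟩ := h
  exact ⟨a, hST ha, b, hST hb, c, hST hc, rest⟩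

theorem hasFacingTriple_of_disjoint {S : Set (Set X)} {w H : ℕ → Set X} (hwS : ∀ n, w n ∈ S)
    (hw : Injective w) (hH : ∀ n, H n = w n ∨ H n = (w n)ᶜ)
    (hdisj : ∀ i j, i < j → Disjoint (H i) (H j)) : HasFacingTriple S :=
  ⟨w 0, hwS 0, w 1, hwS 1, w 2, hwS 2, hw.ne (by decide), hw.ne (by decide), hw.ne (by decide),
    H 0, H 1, H 2, hH 0, hH 1, hH 2, hdisj 0 1 (by decide), hdisj 0 2 (by decide),
    hdisj 1 2 (by decide)⟩

structure HalfspaceChain (S : Set (Set X)) where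
  wall : ℕ → Set X
  half : ℕ → Set X
  wall_mem : ∀ n, wall n ∈ S
  wall_injective : Injective wall
  half_eq : ∀ n, half n = wall n ∨ half n = (wall n)ᶜ
  half_antitone : Antitone half

theorem exists_halfspaceChain {W S : Set (Set X)} (hnic : NoInfCross W) (hSW : S ⊆ W)
    (hS : S.Infinite) (hft : ¬ HasFacingTriple S) : Nonempty (HalfspaceChain S) := by
  let w : ℕ → Set X := fun n => hS.natEmbedding S n
  have hw : Injective w := Subtype.val_injective.comp (hS.natEmbedding S).injective
  have hwS : ∀ n, w n ∈ S := fun n => (hS.natEmbedding S n).2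
  obtain ⟨t, ht, k, hk⟩ := exists_strictMono_forall_lt_of_finite_cover
    (fun (k : Option (Bool × Bool)) i j =>
      k.elim (Crosses (w i) (w j)) fun p => Disjoint (halfspace p.1 (w i)) (halfspace p.2 (w j)))
    fun i j _ => by
      by_cases h : Crosses (w i) (w j)
      · exact ⟨none, h⟩
      · obtain ⟨a, b, hab⟩ := not_crosses_iff_exists_disjoint.1 h
        exact ⟨some (a, b), hab⟩
  have hwt : Injective (w ∘ t) := hw.comp ht.injective
  rcases k with _ | ⟨a, b⟩
  · exact absurd (hnic _ (range_subset_iff.2 fun n => hSW (hwS _))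
      (pairwise_crosses_of_lt hk).range_pairwise) (infinite_range_of_injective hwt)
  obtain rfl | rfl : b = a ∨ b = !a := by cases a <;> cases b <;> simp
  · exact absurd (hasFacingTriple_of_disjoint (fun _ => hwS _) hwt
      (fun _ => halfspace_eq_or _ _) hk) hft
  · refine ⟨⟨w ∘ t, fun n => halfspace (!a) (w (t n)), fun _ => hwS _, hwt,
      fun _ => halfspace_eq_or _ _, antitone_nat_of_succ_le fun n => ?_⟩⟩
    simpa [compl_halfspace] using (hk n (n + 1) n.lt_succ_self).subset_compl_left

theorem compl_eq_or_eq_compl {H w : Set X} (h : H = w ∨ H = wᶜ) : Hᶜ = w ∨ Hᶜ = wᶜ := by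
  rcases h with rfl | rfl <;> simp

theorem liesIn_of_subset {u w H K : Set X} (hne : u ≠ w) (hK : K = u ∨ K = uᶜ) (h : K ⊆ H) :
    LiesIn u H w := by
  rcases hK with rfl | rfl
  exacts [⟨hne, .inl h⟩, ⟨hne, .inr h⟩]

theorem Unidirectional.finite_or_finite {V : Set (Set X)} (huni : Unidirectional V) {w H : Set X}
    (hw : w ∈ V) (hH : H = w ∨ H = wᶜ) :
    {u ∈ V | LiesIn u H w}.Finite ∨ {u ∈ V | LiesIn u Hᶜ w}.Finite := by
  rcases hH with rfl | rfl
  · exact huni H hw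
  · simpa only [compl_compl, or_comm] using huni w hw

def EventuallyCrosses (c d : ℕ → Set X) : Prop :=
  ∀ᶠ n in atTop, ∀ᶠ m in atTop, Crosses (c n) (d m)

namespace HalfspaceChain

variable {W V A B : Set (Set X)}

theorem not_forall_liesIn_compl (huni : Unidirectional V) (hAV : A ⊆ V)
    (c : HalfspaceChain A) (n : ℕ) {u : ℕ → Set X} (hu : Injective u) (huV : ∀ m, u m ∈ V) :
    ¬ ∀ m, LiesIn (u m) (c.half n)ᶜ (c.wall n) := by
  intro h
  rcases huni.finite_or_finite (hAV (c.wall_mem n)) (c.half_eq n) with hfin | hfin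
  · refine ((Ioi_infinite n).image c.wall_injective.injOn) (hfin.subset ?_)
    rintro _ ⟨m, hm, rfl⟩
    exact ⟨hAV (c.wall_mem m), liesIn_of_subset (c.wall_injective.ne (ne_of_gt hm))
      (c.half_eq m) (c.half_antitone (le_of_lt hm))⟩
  · exact infinite_range_of_injective hu (hfin.subset (range_subset_iff.2 fun m => ⟨huV m, h m⟩))

theorem exists_not_half_subset (huni : Unidirectional V) (hAV : A ⊆ V) (hBV : B ⊆ V)
    (hAB : Disjoint A B) (c : HalfspaceChain A) (d : HalfspaceChain B) (n : ℕ) :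
    ∃ m, ¬ c.half n ⊆ d.half m := by
  by_contra! h
  refine c.not_forall_liesIn_compl huni hAV n d.wall_injective (fun m => hBV (d.wall_mem m))
    fun m => liesIn_of_subset (hAB.ne_of_mem (c.wall_mem n) (d.wall_mem m)).symm
      (compl_eq_or_eq_compl (d.half_eq m)) (compl_subset_compl.2 (h m))

theorem not_disjoint_half (huni : Unidirectional V) (hAV : A ⊆ V) (hBV : B ⊆ V)
    (hAB : Disjoint A B) (c : HalfspaceChain A) (d : HalfspaceChain B) (n m : ℕ) :
    ¬ Disjoint (c.half n) (d.half m) := fun h =>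
  c.not_forall_liesIn_compl huni hAV n (u := fun i => d.wall (m + i))
    (d.wall_injective.comp (add_right_injective m)) (fun _ => hBV (d.wall_mem _))
    fun i => liesIn_of_subset (hAB.ne_of_mem (c.wall_mem n) (d.wall_mem _)).symm (d.half_eq _)
      ((d.half_antitone (m.le_add_right i)).trans h.subset_compl_left)

theorem not_half_subset_of_half_subset (hAW : A ⊆ W) (hB : InseparableIn W B)
    (hAB : Disjoint A B) (c : HalfspaceChain A) (d : HalfspaceChain B) {n m m' : ℕ}
    (hm : m ≠ m') (h : d.half m ⊆ c.half n) : ¬ c.half n ⊆ d.half m' := fun h' =>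
  have hsep : Separates (c.wall n) (d.wall m) (d.wall m') :=
    ⟨d.wall_injective.ne hm, (hAB.ne_of_mem (c.wall_mem n) (d.wall_mem m)).symm,
      (hAB.ne_of_mem (c.wall_mem n) (d.wall_mem m')).symm, _, _, _, d.half_eq m,
      compl_eq_or_eq_compl (d.half_eq m'), c.half_eq n, h, compl_subset_compl.2 h'⟩
  disjoint_left.1 hAB (c.wall_mem n)
    (hB _ (d.wall_mem m) _ (d.wall_mem m') _ (hAW (c.wall_mem n)) hsep)

theorem trichotomy (huni : Unidirectional V) (hAV : A ⊆ V) (hBV : B ⊆ V) (hAW : A ⊆ W)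
    (hB : InseparableIn W B) (hAB : Disjoint A B) (c : HalfspaceChain A) (d : HalfspaceChain B) :
    Disjoint (c.half 0)ᶜ (d.half 0)ᶜ ∨ EventuallyCrosses c.wall d.wall ∨
      EventuallyCrosses d.wall c.wall := by
  rw [or_iff_not_imp_left, not_disjoint_iff]
  rintro ⟨x, hxc, hxd⟩
  have hnested : ∀ n m, ¬ Crosses (c.wall n) (d.wall m) →
      c.half n ⊆ d.half m ∨ d.half m ⊆ c.half n := by
    intro n m h
    rw [← crosses_iff_of_eq_or_eq_compl (c.half_eq n) (d.half_eq m), not_crosses_iff] at h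
    rcases h with h | h | h | h
    · exact absurd h (c.not_disjoint_half huni hAV hBV hAB d n m)
    · exact .inl h
    · exact .inr h
    · exact absurd h (not_disjoint_iff.2 ⟨x, compl_subset_compl.2 (c.half_antitone n.zero_le) hxc,
        compl_subset_compl.2 (d.half_antitone m.zero_le) hxd⟩)
  by_cases hsub : ∃ n₀ m₀, c.half n₀ ⊆ d.half m₀
  · obtain ⟨n₀, m₀, h₀⟩ := hsub
    refine .inl ?_
    filter_upwards [eventually_ge_atTop n₀] with n hn
    obtain ⟨m₁, hm₁⟩ := c.exists_not_half_subset huni hAV hBV hAB d n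
    filter_upwards [eventually_ge_atTop m₁, eventually_ne_atTop m₀] with m hm hm₀
    by_contra hnc
    rcases hnested n m hnc with h | h
    · exact hm₁ (h.trans (d.half_antitone hm))
    · exact c.not_half_subset_of_half_subset hAW hB hAB d hm₀ h ((c.half_antitone hn).trans h₀)
  · simp only [not_exists] at hsub
    refine .inr (.of_forall fun m => ?_)
    obtain ⟨n₁, hn₁⟩ := d.exists_not_half_subset huni hBV hAV hAB.symm c m
    filter_upwards [eventually_ge_atTop n₁] with n hn
    by_contra hnc
    exact (hnested n m (mt Crosses.symm hnc)).elim (hsub n m)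
      fun h => hn₁ (h.trans (c.half_antitone hn))

end HalfspaceChain

theorem exists_forall_crosses_of_eventuallyCrosses {k : ℕ} (c : ℕ → ℕ → Set X)
    (h : ∀ a b, a < b → b < k → EventuallyCrosses (c a) (c b)) :
    ∃ f : ℕ → ℕ, ∀ a b, a < b → b < k → Crosses (c a (f a)) (c b (f b)) := by
  -- Choose `f 0, f 1, …` in turn, each `c a (f a)` crossing almost all walls of the later chains.
  suffices ∀ r ≤ k, ∃ f : ℕ → ℕ, (∀ a b, a < b → b < r → Crosses (c a (f a)) (c b (f b))) ∧
      ∀ a < r, ∀ b, a < b → b < k → ∀ᶠ m in atTop, Crosses (c a (f a)) (c b m) by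
    obtain ⟨f, hf, -⟩ := this k le_rfl
    exact ⟨f, hf⟩
  intro r
  induction r with
  | zero => exact fun _ => ⟨id, fun _ _ _ h => absurd h (Nat.not_lt_zero _),
      fun _ h => absurd h (Nat.not_lt_zero _)⟩
  | succ r ih =>
    intro hr
    obtain ⟨f, hf, hlate⟩ := ih (by omega)
    have hnext : ∀ᶠ m in atTop, (∀ a ∈ Iio r, Crosses (c a (f a)) (c r m)) ∧
        ∀ b ∈ Iio k, r < b → ∀ᶠ m' in atTop, Crosses (c r m) (c b m') :=
      ((eventually_all_finite (finite_Iio r)).2 fun a ha => hlate a ha r ha hr).and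
        ((eventually_all_finite (finite_Iio k)).2 fun b hb =>
          eventually_imp_distrib_left.2 fun hrb => h r b hrb hb)
    obtain ⟨m, hm_cross, hm_late⟩ := hnext.exists
    refine ⟨update f r m, fun a b hab hb => ?_, fun a ha b hab hb => ?_⟩
    · rcases Nat.lt_succ_iff_lt_or_eq.1 hb with hb | rfl
      · rw [update_of_ne (by omega), update_of_ne (by omega)]
        exact hf a b hab hb
      · rw [update_of_ne hab.ne, update_self]
        exact hm_cross a hab
    · rcases Nat.lt_succ_iff_lt_or_eq.1 ha with ha | rfl
      · rw [update_of_ne ha.ne]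
        exact hlate a ha b hab hb
      · rw [update_self]
        exact hm_late b hb hab

theorem DimLE.not_forall_eventuallyCrosses {W : Set (Set X)} {D : ℕ} (hdim : DimLE W D)
    {c : ℕ → ℕ → Set X} (hcW : ∀ a n, c a n ∈ W) :
    ¬ ∀ a b, a < b → b < D + 1 → EventuallyCrosses (c a) (c b) := fun h =>
  let ⟨f, hf⟩ := exists_forall_crosses_of_eventuallyCrosses c h
  hdim.not_forall_crosses (fun a => hcW a (f a)) hf

theorem IsUBS.finite_of_pairwise_disjoint {W V : Set (Set X)} {D : ℕ} (hdim : DimLE W D)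
    (hV : IsUBS W V) {J : Type*} {U : J → Set (Set X)} (hUV : ∀ j, U j ⊆ V)
    (hU : ∀ j, InseparableIn W (U j)) (hUinf : ∀ j, (U j).Infinite)
    (hdisj : Pairwise (Disjoint on U)) : Finite J := by
  obtain ⟨hVW, -, -, huni, hft⟩ := hV
  rw [← not_infinite_iff_finite]
  intro hJ
  let e := Infinite.natEmbedding J
  let ch : ∀ i, HalfspaceChain (U (e i)) := fun i => (exists_halfspaceChain hdim.noInfCross
    ((hUV _).trans hVW) (hUinf _) fun h => hft (h.mono (hUV _))).some
  have hdisj' : ∀ i j, i ≠ j → Disjoint (U (e i)) (U (e j)) :=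
    fun i j hij => hdisj (e.injective.ne hij)
  have hchW : ∀ i n, (ch i).wall n ∈ W := fun i n => hVW (hUV _ ((ch i).wall_mem n))
  obtain ⟨t, ht, k, hk⟩ := exists_strictMono_forall_lt_of_finite_cover (γ := Fin 3)
    (fun k i j => ![Disjoint ((ch i).half 0)ᶜ ((ch j).half 0)ᶜ,
      EventuallyCrosses (ch i).wall (ch j).wall, EventuallyCrosses (ch j).wall (ch i).wall] k)
    fun i j hij => by
      rcases (ch i).trichotomy huni (hUV _) (hUV _) ((hUV _).trans hVW) (hU _)
        (hdisj' i j hij.ne) (ch j) with h | h | h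
      exacts [⟨0, h⟩, ⟨1, h⟩, ⟨2, h⟩]
  fin_cases k
  · refine hft (hasFacingTriple_of_disjoint (w := fun a => (ch (t a)).wall 0)
      (fun a => hUV _ ((ch _).wall_mem 0)) (fun a b hab => ?_)
      (fun a => compl_eq_or_eq_compl ((ch _).half_eq 0)) hk)
    by_contra hne
    exact (hdisj' _ _ (ht.injective.ne hne)).ne_of_mem ((ch _).wall_mem 0) ((ch _).wall_mem 0) hab
  · exact hdim.not_forall_eventuallyCrosses (fun a n => hchW (t a) n) fun a b hab _ => hk a b hab
  · exact hdim.not_forall_eventuallyCrosses (c := fun a => (ch (t (D - a))).wall)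
      (fun a n => hchW _ n) fun a b hab hb => hk (D - b) (D - a) (by omega)

theorem AlmostEq.symm {S T : Set (Set X)} (h : AlmostEq S T) : AlmostEq T S := ⟨h.2, h.1⟩

theorem AlmostEq.trans {S T R : Set (Set X)} (h₁ : AlmostEq S T) (h₂ : AlmostEq T R) :
    AlmostEq S R :=
  ⟨(h₁.1.union h₂.1).subset (sdiff_triangle S T R), (h₂.2.union h₁.2).subset (sdiff_triangle R T S)⟩

theorem IsUBS.inter {W A B : Set (Set X)} (hA : IsUBS W A) (hB : IsUBS W B)
    (hinf : (A ∩ B).Infinite) : IsUBS W (A ∩ B) := by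
  refine ⟨inter_subset_left.trans hA.1, hinf, fun u hu v hv w hw hsep =>
    ⟨hA.2.2.1 u hu.1 v hv.1 w hw hsep, hB.2.2.1 u hu.2 v hv.2 w hw hsep⟩, fun w hw => ?_,
    fun hft => hA.2.2.2.2 (hft.mono inter_subset_left)⟩
  have hsub : ∀ H, {u ∈ A ∩ B | LiesIn u H w} ⊆ {u ∈ A | LiesIn u H w} :=
    fun _ u hu => ⟨hu.1.1, hu.2⟩
  exact (hA.2.2.2.1 w hw.1).imp (·.subset (hsub _)) (·.subset (hsub _))

theorem MinUBS.almostEq_of_infinite_inter {W A B : Set (Set X)} (hA : MinUBS W A)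
    (hB : MinUBS W B) (hinf : (A ∩ B).Infinite) : AlmostEq A B :=
  have hAB := hA.1.inter hB.1 hinf
  ((hA.2 _ hAB inter_subset_left).symm).trans (hB.2 _ hAB inter_subset_right)

theorem exists_inter_infinite_of_finite_diff_iUnion {α ι : Type*} [Finite ι] {s : Set α}
    {t : ι → Set α} (hs : s.Infinite) (h : (s \ ⋃ i, t i).Finite) : ∃ i, (s ∩ t i).Infinite := by
  by_contra! hfin
  refine hs ((h.union (finite_iUnion hfin)).subset fun x hx => ?_)
  by_cases hxt : x ∈ ⋃ i, t i
  · obtain ⟨i, hi⟩ := mem_iUnion.1 hxt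
    exact .inr (mem_iUnion.2 ⟨i, hx, hi⟩)
  · exact .inl ⟨hx, hxt⟩

theorem eq_of_almostEq {ι : Type*} {U : ι → Set (Set X)} (hU : ∀ i, (U i).Infinite)
    (hdisj : Pairwise (Disjoint on U)) {i j : ι} (h : AlmostEq (U i) (U j)) : i = j := by
  by_contra hne
  exact hU i ((hdisj hne).sdiff_eq_left ▸ h.1)

theorem exists_equiv_almostEq {I I' : Type*} [Finite I] [Finite I'] {U : I → Set (Set X)}
    {U' : I' → Set (Set X)} (hU : ∀ i, (U i).Infinite) (hU' : ∀ j, (U' j).Infinite)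
    (hdisj : Pairwise (Disjoint on U)) (hdisj' : Pairwise (Disjoint on U'))
    (hcov : ∀ i, (U i \ ⋃ j, U' j).Finite) (hcov' : ∀ j, (U' j \ ⋃ i, U i).Finite)
    (hae : ∀ i j, (U i ∩ U' j).Infinite → AlmostEq (U i) (U' j)) :
    ∃ σ : I ≃ I', ∀ i, AlmostEq (U i) (U' (σ i)) := by
  choose σ hσ using fun i => exists_inter_infinite_of_finite_diff_iUnion (hU i) (hcov i)
  have hσ_inj : Injective σ := fun i₁ i₂ h =>
    eq_of_almostEq hU hdisj ((hae _ _ (hσ i₁)).trans (h ▸ hae _ _ (hσ i₂)).symm)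
  have hσ_surj : Surjective σ := fun j => by
    obtain ⟨i, hi⟩ := exists_inter_infinite_of_finite_diff_iUnion (hU' j) (hcov' j)
    rw [inter_comm] at hi
    exact ⟨i, eq_of_almostEq hU' hdisj' ((hae _ _ (hσ i)).symm.trans (hae _ _ hi))⟩
  exact ⟨.ofBijective σ ⟨hσ_inj, hσ_surj⟩, fun i => hae _ _ (hσ i)⟩

theorem ubs_decomposition_unique_general (W : Set (Set X))
    (D : ℕ) (hdim : DimLE W D)
    (V : Set (Set X)) (hV : IsUBS W V)
    (I I' : Type) (U : I → Set (Set X)) (U' : I' → Set (Set X))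
    (hUV : ∀ i, U i ⊆ V) (hU'V : ∀ i, U' i ⊆ V)
    (hU : ∀ i, MinUBS W (U i)) (hU' : ∀ i, MinUBS W (U' i))
    (hdisj : Pairwise (Function.onFun Disjoint U))
    (hdisj' : Pairwise (Function.onFun Disjoint U'))
    (hae : AlmostEq V (⋃ i, U i)) (hae' : AlmostEq V (⋃ i, U' i)) :
    Finite I ∧ Finite I' ∧ ∃ σ : I ≃ I', ∀ i, AlmostEq (U i) (U' (σ i)) := by
  have hI : Finite I := hV.finite_of_pairwise_disjoint hdim hUV (fun i => (hU i).1.2.2.1)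
    (fun i => (hU i).1.2.1) hdisj
  have hI' : Finite I' := hV.finite_of_pairwise_disjoint hdim hU'V (fun j => (hU' j).1.2.2.1)
    (fun j => (hU' j).1.2.1) hdisj'
  obtain ⟨σ, hσ⟩ := exists_equiv_almostEq (fun i => (hU i).1.2.1) (fun j => (hU' j).1.2.1)
    hdisj hdisj' (fun i => hae'.1.subset (sdiff_subset_sdiff_left (hUV i)))
    (fun j => hae.1.subset (sdiff_subset_sdiff_left (hU'V j)))
    fun i j h => (hU i).almostEq_of_infinite_inter (hU' j) h
  exact ⟨hI, hI', σ, hσ⟩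

/-- Uniqueness of the decomposition of a UBS into minimal UBSs, in finite dimension. -/
theorem ubs_decomposition_unique (W : Set (Set X))
    (hWc : W.Countable) (hWwall : ∀ h ∈ W, IsWall h)
    (hWadm : Admissible W) (hWnic : NoInfCross W)
    (D : ℕ) (hdim : DimLE W D)
    (V : Set (Set X)) (hV : IsUBS W V)
    (I I' : Type) (U : I → Set (Set X)) (U' : I' → Set (Set X))
    (hUV : ∀ i, U i ⊆ V) (hU'V : ∀ i, U' i ⊆ V)
    (hU : ∀ i, MinUBS W (U i)) (hU' : ∀ i, MinUBS W (U' i))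
    (hdisj : Pairwise (Function.onFun Disjoint U))
    (hdisj' : Pairwise (Function.onFun Disjoint U'))
    (hae : AlmostEq V (⋃ i, U i)) (hae' : AlmostEq V (⋃ i, U' i)) :
    Finite I ∧ Finite I' ∧ ∃ σ : I ≃ I', ∀ i, AlmostEq (U i) (U' (σ i)) :=
  ubs_decomposition_unique_general W D hdim V hV I I' U U' hUV hU'V hU hU' hdisj hdisj' hae hae'
end

section
/- If S ⊆ 𝒲 is an infinite set of pairwise non-crossing walls containing no facing triple, then S contains a chain: there is an injective sequence (c_n)_{n∈ℕ} of walls of S such that c_n separates c_{n−1} and c_{n+1} for every n ≥ 1. -/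
open Set

variable {X : Type*}

lemma crosses_of_compl {a b : Set X} (h : Crosses aᶜ bᶜ) : Crosses a b := by
  obtain ⟨h1, h2, h3, h4⟩ := h
  simp only [compl_compl] at h2 h3 h4
  exact ⟨h4, h3, h2, h1⟩

lemma nested_of_not_crosses {a b : Set X} (h : ¬ Crosses a b)
    (h1 : (a ∩ b).Nonempty) (h4 : (aᶜ ∩ bᶜ).Nonempty) : a ⊆ b ∨ b ⊆ a := by
  by_cases h2 : (a ∩ bᶜ).Nonempty
  · by_cases h3 : (aᶜ ∩ b).Nonempty
    · exact absurd ⟨h1, h2, h3, h4⟩ h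
    · right
      intro x hx
      by_contra hxa
      exact h3 ⟨x, hxa, hx⟩
  · left
    intro x hx
    by_contra hxb
    exact h2 ⟨x, hx, hxb⟩

lemma lemA (S : Set (Set X))
    (hnc : S.Pairwise fun h k => ¬ Crosses h k)
    (hft : ¬ HasFacingTriple S)
    (h₀ : Set X) (hh₀S : h₀ ∈ S) (h' : Set X) (hh' : h' = h₀ ∨ h' = h₀ᶜ)
    (hh'c : h'ᶜ.Nonempty)
    (τ : Set X → Set X) (hτ : (∀ k, τ k = k) ∨ (∀ k, τ k = kᶜ))
    (T : Set (Set X)) (hT : T ⊆ S) (hTh₀ : h₀ ∉ T) (hTinf : T.Infinite)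
    (hsub : ∀ k ∈ T, τ k ⊆ h') :
    ∃ c : ℕ → Set X, Function.Injective c ∧ (∀ n, c n ∈ S) ∧
      ∀ n, Separates (c (n + 1)) (c n) (c (n + 2)) := by
  have hτhalf : ∀ k : Set X, τ k = k ∨ τ k = kᶜ := by
    rcases hτ with h | h
    · exact fun k => Or.inl (h k)
    · exact fun k => Or.inr (h k)
  have hh'chalf : h'ᶜ = h₀ ∨ h'ᶜ = h₀ᶜ := by
    rcases hh' with rfl | rfl
    · exact Or.inr rfl
    · exact Or.inl (compl_compl h₀)
  -- pairwise intersecting halfspaces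
  have hnonint : ∀ k₁ ∈ T, ∀ k₂ ∈ T, k₁ ≠ k₂ → (τ k₁ ∩ τ k₂).Nonempty := by
    intro k₁ hk₁ k₂ hk₂ hne
    by_contra hdisj
    rw [Set.not_nonempty_iff_eq_empty, ← Set.disjoint_iff_inter_eq_empty] at hdisj
    have hd1 : Disjoint h'ᶜ (τ k₁) := disjoint_compl_left.mono_right (hsub k₁ hk₁)
    have hd2 : Disjoint h'ᶜ (τ k₂) := disjoint_compl_left.mono_right (hsub k₂ hk₂)
    exact hft ⟨h₀, hh₀S, k₁, hT hk₁, k₂, hT hk₂,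
      fun h => hTh₀ (h ▸ hk₁), fun h => hTh₀ (h ▸ hk₂), hne,
      h'ᶜ, τ k₁, τ k₂, hh'chalf, hτhalf k₁, hτhalf k₂, hd1, hd2, hdisj⟩
  -- total order
  have htot : ∀ k₁ ∈ T, ∀ k₂ ∈ T, k₁ ≠ k₂ → τ k₁ ⊆ τ k₂ ∨ τ k₂ ⊆ τ k₁ := by
    intro k₁ hk₁ k₂ hk₂ hne
    have hcc : h'ᶜ ⊆ (τ k₁)ᶜ ∩ (τ k₂)ᶜ :=
      subset_inter (compl_subset_compl.2 (hsub k₁ hk₁)) (compl_subset_compl.2 (hsub k₂ hk₂))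
    have h4 : ((τ k₁)ᶜ ∩ (τ k₂)ᶜ).Nonempty := hh'c.mono hcc
    have hncr : ¬ Crosses k₁ k₂ := hnc (hT hk₁) (hT hk₂) hne
    have hncr' : ¬ Crosses (τ k₁) (τ k₂) := by
      rcases hτ with h | h
      · rwa [h k₁, h k₂]
      · rw [h k₁, h k₂]
        exact fun hc => hncr (crosses_of_compl hc)
    exact nested_of_not_crosses hncr' (hnonint k₁ hk₁ k₂ hk₂ hne) h4
  -- enumerate T
  obtain ⟨f⟩ : Nonempty (ℕ ↪ T) := ⟨hTinf.natEmbedding⟩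
  set F : ℕ → Set X := fun n => (f n : Set X) with hF
  have hFinj : Function.Injective F := fun a b h => f.injective (Subtype.ext h)
  have hFT : ∀ n, F n ∈ T := fun n => (f n).2
  -- extract monotone subsequence
  haveI : IsTrans (Set X) (fun a b => τ a ⊆ τ b) := ⟨fun _ _ _ h1 h2 => h1.trans h2⟩
  obtain ⟨g, hg⟩ := exists_increasing_or_nonincreasing_subseq (fun a b => τ a ⊆ τ b) F
  have hdir : (∀ m n : ℕ, m < n → τ (F (g m)) ⊆ τ (F (g n))) ∨
      (∀ m n : ℕ, m < n → τ (F (g n)) ⊆ τ (F (g m))) := by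
    rcases hg with h | h
    · exact Or.inl h
    · right
      intro m n hmn
      have hne : F (g m) ≠ F (g n) :=
        fun he => absurd (g.injective (hFinj he)) (by omega)
      rcases htot _ (hFT _) _ (hFT _) hne with h1 | h1
      · exact absurd h1 (h m n hmn)
      · exact h1
  have hhalfc : ∀ k : Set X, (τ k)ᶜ = k ∨ (τ k)ᶜ = kᶜ := by
    intro k
    rcases hτhalf k with h | h
    · rw [h]; exact Or.inr rfl
    · rw [h, compl_compl]; exact Or.inl rfl
  have hne : ∀ m n : ℕ, m ≠ n → F (g m) ≠ F (g n) :=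
    fun m n h he => h (g.injective (hFinj he))
  refine ⟨F ∘ g, hFinj.comp g.injective, fun n => hT (hFT (g n)), fun n => ?_⟩
  refine ⟨hne n (n+2) (by omega), hne n (n+1) (by omega), hne (n+2) (n+1) (by omega), ?_⟩
  rcases hdir with hd | hd
  · -- increasing
    refine ⟨τ (F (g n)), (τ (F (g (n+2))))ᶜ, τ (F (g (n+1))),
      hτhalf _, hhalfc _, hτhalf _, hd n (n+1) (by omega),
      compl_subset_compl.2 (hd (n+1) (n+2) (by omega))⟩
  · -- decreasing
    refine ⟨(τ (F (g n)))ᶜ, τ (F (g (n+2))), (τ (F (g (n+1))))ᶜ,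
      hhalfc _, hτhalf _, hhalfc _,
      compl_subset_compl.2 (hd n (n+1) (by omega)), ?_⟩
    rw [compl_compl]
    exact hd (n+1) (n+2) (by omega)

/-- Any infinite set of pairwise non-crossing walls with no facing triple contains a chain. -/
theorem infinite_noncrossing_no_facing_triple_contains_chain (W : Set (Set X))
    (hWc : W.Countable) (hWwall : ∀ h ∈ W, IsWall h)
    (hWadm : Admissible W)
    (S : Set (Set X)) (hSW : S ⊆ W) (hSinf : S.Infinite)
    (hnc : S.Pairwise fun h k => ¬ Crosses h k)
    (hft : ¬ HasFacingTriple S) :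
    ∃ c : ℕ → Set X, Function.Injective c ∧ (∀ n, c n ∈ S) ∧
      ∀ n, Separates (c (n + 1)) (c n) (c (n + 2)) := by
  obtain ⟨h₀, hh₀⟩ := hSinf.nonempty
  obtain ⟨hwne, hwcne⟩ := hWwall h₀ (hSW hh₀)
  set T' := S \ {h₀} with hT'
  have hT'inf : T'.Infinite := hSinf.diff (Set.finite_singleton h₀)
  set T1 := {k ∈ T' | k ⊆ h₀ᶜ} with hT1
  set T2 := {k ∈ T' | kᶜ ⊆ h₀ᶜ} with hT2
  set T3 := {k ∈ T' | k ⊆ h₀} with hT3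
  set T4 := {k ∈ T' | kᶜ ⊆ h₀} with hT4
  have hcover : T' ⊆ T1 ∪ T2 ∪ T3 ∪ T4 := by
    intro k hk
    have hkne : h₀ ≠ k := fun h => hk.2 (by simp [h])
    have hncr : ¬ Crosses h₀ k := hnc hh₀ hk.1 hkne
    by_cases c1 : (h₀ ∩ k).Nonempty
    · by_cases c2 : (h₀ ∩ kᶜ).Nonempty
      · by_cases c3 : (h₀ᶜ ∩ k).Nonempty
        · by_cases c4 : (h₀ᶜ ∩ kᶜ).Nonempty
          · exact absurd ⟨c1, c2, c3, c4⟩ hncr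
          · exact Or.inr ⟨hk, fun x hx => by
              by_contra hxh; exact c4 ⟨x, hxh, hx⟩⟩
        · exact Or.inl (Or.inr ⟨hk, fun x hx => by
            by_contra hxh; exact c3 ⟨x, hxh, hx⟩⟩)
      · exact Or.inl (Or.inl (Or.inr ⟨hk, fun x hx hxh => c2 ⟨x, hxh, hx⟩⟩))
    · exact Or.inl (Or.inl (Or.inl ⟨hk, fun x hx hxh => c1 ⟨x, hxh, hx⟩⟩))
  have hTh₀ : ∀ k ∈ T', k ≠ h₀ := fun k hk h => hk.2 (by simp [h])
  rcases T1.finite_or_infinite with f1 | i1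
  rotate_left
  · exact lemA S hnc hft h₀ hh₀ h₀ᶜ (Or.inr rfl) (by rwa [compl_compl]) id
      (Or.inl fun k => rfl) T1 (fun k hk => hk.1.1)
      (fun h => hTh₀ h₀ h.1 rfl) i1 (fun k hk => hk.2)
  rcases T2.finite_or_infinite with f2 | i2
  rotate_left
  · exact lemA S hnc hft h₀ hh₀ h₀ᶜ (Or.inr rfl) (by rwa [compl_compl]) compl
      (Or.inr fun k => rfl) T2 (fun k hk => hk.1.1)
      (fun h => hTh₀ h₀ h.1 rfl) i2 (fun k hk => hk.2)
  rcases T3.finite_or_infinite with f3 | i3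
  rotate_left
  · exact lemA S hnc hft h₀ hh₀ h₀ (Or.inl rfl) hwcne id
      (Or.inl fun k => rfl) T3 (fun k hk => hk.1.1)
      (fun h => hTh₀ h₀ h.1 rfl) i3 (fun k hk => hk.2)
  rcases T4.finite_or_infinite with f4 | i4
  rotate_left
  · exact lemA S hnc hft h₀ hh₀ h₀ (Or.inl rfl) hwcne compl
      (Or.inr fun k => rfl) T4 (fun k hk => hk.1.1)
      (fun h => hTh₀ h₀ h.1 rfl) i4 (fun k hk => hk.2)
  exact absurd (Set.Finite.subset (((f1.union f2).union f3).union f4) hcover) hT'inf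
end

section
/- Let U ⊆ 𝒲 be a minimal UBS and let C be a chain whose set of terms is contained in U. Then the inseparable closure in 𝒲 of the set of terms of C is contained in U, and U ∖ (that inseparable closure) is finite; in particular U is almost-equivalent to the inseparable closure of the set of terms of C. -/
open Set

variable {X : Type*}

/-- A minimal UBS is almost-equivalent to the inseparable closure of any chain it contains. -/
theorem minimal_ubs_almostEq_insep_closure_of_chain (W : Set (Set X))
    (hWc : W.Countable) (hWwall : ∀ h ∈ W, IsWall h)
    (hWadm : Admissible W) (hWnic : NoInfCross W)
    (U : Set (Set X)) (hU : MinUBS W U)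
    (c : ℕ → Set X) (hc : IsChainSeq c) (hcU : ∀ n, c n ∈ U) :
    insepClosure W (Set.range c) ⊆ U ∧
    (U \ insepClosure W (Set.range c)).Finite ∧
    AlmostEq U (insepClosure W (Set.range c)) := by
  obtain ⟨⟨hUW, hUinf, hUinsep, hUuni, hUnft⟩, hmin⟩ := hU
  set K := insepClosure W (Set.range c) with hK
  have hrc : Set.range c ⊆ U := by rintro _ ⟨n, rfl⟩; exact hcU n
  have hKU : K ⊆ U := Set.sInter_subset_of_mem ⟨hrc, hUW, hUinsep⟩
  have hrK : Set.range c ⊆ K := Set.subset_sInter (fun S hS => hS.1)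
  have hKubs : IsUBS W K := by
    refine ⟨hKU.trans hUW, ?_, ?_, ?_, ?_⟩
    · exact ((Set.infinite_range_of_injective hc.1).mono hrK)
    · intro u hu v hv w hw hsep S hS
      exact hS.2.2 u (hu S hS) v (hv S hS) w hw hsep
    · intro w hw
      rcases hUuni w (hKU hw) with h | h
      · exact Or.inl (h.subset (fun u hu => ⟨hKU hu.1, hu.2⟩))
      · exact Or.inr (h.subset (fun u hu => ⟨hKU hu.1, hu.2⟩))
    · intro ⟨a, ha, b, hb, d, hd, rest⟩
      exact hUnft ⟨a, hKU ha, b, hKU hb, d, hKU hd, rest⟩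
  have hae := hmin K hKubs hKU
  exact ⟨hKU, hae.2, hae.2, hae.1⟩
end

section
/- In the setup below, the set V₁⁻ is inseparable. -/
open Set

variable {X : Type*}

/-- The sub-collection of `V ∖ U₁` (where `U₁` is the inseparable closure of the chain `c`)
consisting of walls crossing all but finitely many walls of `U₁`. -/
def V1plus (W V : Set (Set X)) (c : ℕ → Set X) : Set (Set X) :=
  {v ∈ V \ insepClosure W (Set.range c) |
    {u ∈ insepClosure W (Set.range c) | ¬ Crosses v u}.Finite}

/-- The complement of `V₁⁺` in `V₁ = V ∖ U₁`. -/
def V1minus (W V : Set (Set X)) (c : ℕ → Set X) : Set (Set X) :=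
  (V \ insepClosure W (Set.range c)) \ V1plus W V c

lemma cross_meet {x a A B : Set X} (h : Crosses x a)
    (hA : A = a ∨ A = aᶜ) (hB : B = x ∨ B = xᶜ) : (A ∩ B).Nonempty := by
  obtain ⟨h1, h2, h3, h4⟩ := h
  rcases hA with rfl | rfl <;> rcases hB with rfl | rfl
  · obtain ⟨t, ht1, ht2⟩ := h1; exact ⟨t, ht2, ht1⟩
  · obtain ⟨t, ht1, ht2⟩ := h3; exact ⟨t, ht2, ht1⟩
  · obtain ⟨t, ht1, ht2⟩ := h2; exact ⟨t, ht2, ht1⟩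
  · obtain ⟨t, ht1, ht2⟩ := h4; exact ⟨t, ht2, ht1⟩

lemma not_crosses_of {w a A B : Set X} (hA : A = a ∨ A = aᶜ)
    (hB : B = w ∨ B = wᶜ) (h : A ⊆ B) : ¬ Crosses w a := by
  intro hcr
  rcases hB with rfl | rfl
  · obtain ⟨t, htA, htB⟩ := cross_meet hcr hA (Or.inr rfl)
    exact htB (h htA)
  · obtain ⟨t, htA, htB⟩ := cross_meet hcr hA (Or.inl rfl)
    exact (h htA) htB

lemma not_crosses_elim {x a : Set X} (h : ¬ Crosses x a) :
    ∃ Z B, (Z = a ∨ Z = aᶜ) ∧ (B = x ∨ B = xᶜ) ∧ Z ⊆ B := by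
  by_cases h1 : (x ∩ a).Nonempty
  · by_cases h2 : (x ∩ aᶜ).Nonempty
    · by_cases h3 : (xᶜ ∩ a).Nonempty
      · have h4 : ¬ (xᶜ ∩ aᶜ).Nonempty := fun h4 => h ⟨h1, h2, h3, h4⟩
        refine ⟨aᶜ, x, Or.inr rfl, Or.inl rfl, fun t ht => ?_⟩
        by_contra htx
        exact h4 ⟨t, htx, ht⟩
      · refine ⟨a, x, Or.inl rfl, Or.inl rfl, fun t ht => ?_⟩
        by_contra htx
        exact h3 ⟨t, htx, ht⟩
    · refine ⟨aᶜ, xᶜ, Or.inr rfl, Or.inr rfl, fun t ht => fun htx => ?_⟩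
      exact h2 ⟨t, htx, ht⟩
  · refine ⟨a, xᶜ, Or.inl rfl, Or.inr rfl, fun t ht => fun htx => ?_⟩
    exact h1 ⟨t, htx, ht⟩

lemma half_pair {b D Z : Set X} (hD : D = b ∨ D = bᶜ) (hZ : Z = b ∨ Z = bᶜ) :
    D = Z ∨ D = Zᶜ := by
  rcases hD with rfl | rfl <;> rcases hZ with rfl | rfl
  · exact Or.inl rfl
  · exact Or.inr (compl_compl _).symm
  · exact Or.inr rfl
  · exact Or.inl rfl

lemma compl_both {Z S : Set X} (hS : S.Nonempty) (h1 : Z ⊆ Sᶜ) (h2 : Zᶜ ⊆ Sᶜ) : False := by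
  obtain ⟨t, ht⟩ := hS
  by_cases htZ : t ∈ Z
  · exact (h1 htZ) ht
  · exact (h2 htZ) ht

/-- The set `V₁⁻` is inseparable. -/
theorem v1minus_inseparable (W : Set (Set X))
    (hWc : W.Countable) (hWwall : ∀ h ∈ W, IsWall h)
    (hWadm : Admissible W) (hWnic : NoInfCross W)
    (V : Set (Set X)) (hV : IsUBS W V)
    (c : ℕ → Set X) (hc : IsChainSeq c) (hcV : ∀ n, c n ∈ V)
    (hinext : InextensibleIn V c)
    (hU1min : MinUBS W (insepClosure W (Set.range c)))
    (hU1V : insepClosure W (Set.range c) ⊆ V) :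
    InseparableIn W (V1minus W V c) := by
  obtain ⟨hcinj, hchain⟩ := hc
  have hrW : Set.range c ⊆ W := by rintro _ ⟨n, rfl⟩; exact hV.1 (hcV n)
  have hU1W : insepClosure W (Set.range c) ⊆ W :=
    Set.sInter_subset_of_mem ⟨hrW, subset_rfl, fun u _ v _ w hw _ => hw⟩
  have hrU1 : Set.range c ⊆ insepClosure W (Set.range c) :=
    Set.subset_sInter fun S hS => hS.1
  have hU1ins : InseparableIn W (insepClosure W (Set.range c)) := by
    intro a ha b hb y hyW hysep
    exact Set.mem_sInter.2 fun S hS =>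
      hS.2.2 a (Set.mem_sInter.1 ha S hS) b (Set.mem_sInter.1 hb S hS) y hyW hysep
  set U1 := insepClosure W (Set.range c) with hU1def
  have hcU : ∀ n, c n ∈ U1 := fun n => hrU1 ⟨n, rfl⟩
  -- nonemptiness of halfspaces
  have hhalf_ne : ∀ x x2 : Set X, x ∈ W → (x2 = x ∨ x2 = xᶜ) → x2.Nonempty := by
    intro x x2 hxW hx2
    rcases hx2 with h | h <;> rw [h]
    · exact (hWwall x hxW).1
    · exact (hWwall x hxW).2
  -- distinct walls have distinct halfspaces
  have hne_half : ∀ a b Za Zb : Set X, a ∈ W → b ∈ W → a ≠ b →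
      (Za = a ∨ Za = aᶜ) → (Zb = b ∨ Zb = bᶜ) → Za ≠ Zb := by
    intro a b Za Zb haW hbW hab hZa hZb he
    rcases hZa with h1 | h1 <;> rcases hZb with h2 | h2 <;> rw [h1, h2] at he
    · exact hab he
    · exact hWadm a haW b hbW hab he
    · exact hWadm b hbW a haW (Ne.symm hab) he.symm
    · exact hab (compl_injective he)
  -- dichotomy of sides for walls outside U1
  have dich : ∀ x x2 : Set X, x ∈ W → x ∉ U1 → (x2 = x ∨ x2 = xᶜ) →
      (∀ a ∈ U1, ¬ Crosses x a → ∃ Z, (Z = a ∨ Z = aᶜ) ∧ Z ⊆ x2) ∨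
      (∀ a ∈ U1, ¬ Crosses x a → ∃ Z, (Z = a ∨ Z = aᶜ) ∧ Z ⊆ x2ᶜ) := by
    intro x x2 hxW hxU hx2
    have hside : ∀ a : Set X, ¬ Crosses x a →
        ∃ Z, (Z = a ∨ Z = aᶜ) ∧ (Z ⊆ x2 ∨ Z ⊆ x2ᶜ) := by
      intro a hna
      obtain ⟨Z, B, hZ, hB, hZB⟩ := not_crosses_elim hna
      rcases half_pair hB hx2 with rfl | hBx
      · exact ⟨Z, hZ, Or.inl hZB⟩
      · exact ⟨Z, hZ, Or.inr (hBx ▸ hZB)⟩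
    by_cases hex : ∃ a0, a0 ∈ U1 ∧ ¬ Crosses x a0 ∧
        ¬ ∃ Z, (Z = a0 ∨ Z = a0ᶜ) ∧ Z ⊆ x2
    · right
      obtain ⟨a0, ha0U, ha0nc, ha0⟩ := hex
      obtain ⟨Z0, hZ0, hZ0s⟩ := hside a0 ha0nc
      have hZ0s' : Z0 ⊆ x2ᶜ := by
        rcases hZ0s with h | h
        · exact absurd ⟨Z0, hZ0, h⟩ ha0
        · exact h
      intro a haU hanc
      obtain ⟨Z, hZ, hZs⟩ := hside a hanc
      rcases hZs with hZs | hZs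
      · exfalso
        have hane : a ≠ a0 := by
          rintro rfl
          exact ha0 ⟨Z, hZ, hZs⟩
        exact hxU (hU1ins a haU a0 ha0U x hxW
          ⟨hane, fun h => hxU (by rw [← h]; exact haU),
            fun h => hxU (by rw [← h]; exact ha0U),
            Z, Z0, x2, hZ, hZ0, hx2, hZs, hZ0s'⟩)
      · exact ⟨Z, hZ, hZs⟩
    · left
      intro a haU hanc
      by_contra hno
      exact hex ⟨a, haU, hanc, hno⟩
  -- the set of walls of U1 crossing a given wall x outside U1 is finite
  have xfin : ∀ x : Set X, x ∈ V → x ∉ U1 →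
      ¬ {a ∈ U1 | ¬ Crosses x a}.Finite → {a ∈ U1 | Crosses x a}.Finite := by
    intro x hxV hxU hKinf
    by_contra hinf
    have hXins : InseparableIn W {a ∈ U1 | Crosses x a} := by
      intro a ha b hb y hyW hysep
      refine ⟨hU1ins a ha.1 b hb.1 y hyW hysep, ?_⟩
      obtain ⟨hab, hay, hby, A, B, D, hA, hB, hD, hAD, hBD⟩ := hysep
      have hax := ha.2
      have hbx := hb.2
      rcases hD with rfl | rfl
      · refine ⟨?_, ?_, ?_, ?_⟩
        · obtain ⟨t, htA, htx⟩ := cross_meet hax hA (Or.inl rfl)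
          exact ⟨t, htx, hAD htA⟩
        · obtain ⟨t, htB, htx⟩ := cross_meet hbx hB (Or.inl rfl)
          exact ⟨t, htx, hBD htB⟩
        · obtain ⟨t, htA, htx⟩ := cross_meet hax hA (Or.inr rfl)
          exact ⟨t, htx, hAD htA⟩
        · obtain ⟨t, htB, htx⟩ := cross_meet hbx hB (Or.inr rfl)
          exact ⟨t, htx, hBD htB⟩
      · rw [compl_compl] at hBD
        refine ⟨?_, ?_, ?_, ?_⟩
        · obtain ⟨t, htB, htx⟩ := cross_meet hbx hB (Or.inl rfl)
          exact ⟨t, htx, hBD htB⟩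
        · obtain ⟨t, htA, htx⟩ := cross_meet hax hA (Or.inl rfl)
          exact ⟨t, htx, hAD htA⟩
        · obtain ⟨t, htB, htx⟩ := cross_meet hbx hB (Or.inr rfl)
          exact ⟨t, htx, hBD htB⟩
        · obtain ⟨t, htA, htx⟩ := cross_meet hax hA (Or.inr rfl)
          exact ⟨t, htx, hAD htA⟩
    have hXubs : IsUBS W {a ∈ U1 | Crosses x a} := by
      refine ⟨fun a ha => hU1W ha.1, hinf, hXins, ?_, ?_⟩
      · intro y hy
        rcases hU1min.1.2.2.2.1 y hy.1 with h | h
        · exact Or.inl (h.subset fun z hz => ⟨hz.1.1, hz.2⟩)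
        · exact Or.inr (h.subset fun z hz => ⟨hz.1.1, hz.2⟩)
      · intro hft
        obtain ⟨a, ha, b, hb, c', hc', rest⟩ := hft
        exact hU1min.1.2.2.2.2 ⟨a, ha.1, b, hb.1, c', hc'.1, rest⟩
    have halm := hU1min.2 _ hXubs (fun a ha => ha.1)
    exact hKinf (halm.2.subset fun a ha => ⟨ha.1, fun hX => ha.2 hX.2⟩)
  -- existence of a largest index whose chain term crosses x (bad-side case)
  have maxcross : ∀ x x2 : Set X, x ∈ V → x ∉ U1 → (x2 = x ∨ x2 = xᶜ) →
      ¬ {a ∈ U1 | ¬ Crosses x a}.Finite →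
      (∀ a ∈ U1, ¬ Crosses x a → ∃ Z, (Z = a ∨ Z = aᶜ) ∧ Z ⊆ x2ᶜ) →
      ∃ s, Crosses x (c s) ∧ ∀ n, s < n → ¬ Crosses x (c n) := by
    intro x x2 hxV hxU hx2 hKinf hbad
    have hNfin : {n | Crosses x (c n)}.Finite := by
      have hsub : {n | Crosses x (c n)} ⊆ c ⁻¹' {a ∈ U1 | Crosses x a} :=
        fun n hn => ⟨hcU n, hn⟩
      exact ((xfin x hxV hxU hKinf).preimage hcinj.injOn).subset hsub
    by_cases hNne : ∃ n, Crosses x (c n)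
    · obtain ⟨n0, hn0⟩ := hNne
      obtain ⟨s, hsN, hsmax⟩ :=
        Set.exists_max_image {n | Crosses x (c n)} id hNfin ⟨n0, hn0⟩
      refine ⟨s, hsN, fun n hn hcr => ?_⟩
      have h := hsmax n hcr
      simp only [id_eq] at h
      omega
    · exfalso
      apply hinext
      refine ⟨x, hxV, x2ᶜ, ?_, fun n => ?_⟩
      · rcases hx2 with rfl | rfl
        · exact Or.inr rfl
        · exact Or.inl (compl_compl x)
      · have hnc : ¬ Crosses x (c n) := fun hcr => hNne ⟨n, hcr⟩
        obtain ⟨Z, hZ, hZs⟩ := hbad (c n) (hcU n) hnc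
        refine ⟨fun h => hxU (by rw [← h]; exact hcU n), ?_⟩
        rcases hZ with rfl | rfl
        · exact Or.inl hZs
        · exact Or.inr hZs
  -- monotonicity of halfspaces along the chain past the last crosser
  have mono : ∀ x x2 : Set X, (x2 = x ∨ x2 = xᶜ) → x2.Nonempty →
      (∀ n, ¬ Crosses x (c n) → ∃ Z, (Z = c n ∨ Z = (c n)ᶜ) ∧ Z ⊆ x2ᶜ) →
      ∀ s, Crosses x (c s) → (∀ n, s < n → ¬ Crosses x (c n)) →
      ∀ j, ∀ Z Z' : Set X, (Z = c (s + 1 + j) ∨ Z = (c (s + 1 + j))ᶜ) → Z ⊆ x2ᶜ →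
        (Z' = c (s + 1 + j + 1) ∨ Z' = (c (s + 1 + j + 1))ᶜ) → Z' ⊆ x2ᶜ → Z' ⊆ Z := by
    intro x x2 hx2 hx2ne hbad s hcs hgt j
    induction j with
    | zero =>
      intro Z Z' hZ hZs hZ' hZ's
      obtain ⟨h1, h2, h3, S, T, D, hS, hT, hD, hSD, hTD⟩ := hchain s
      rcases half_pair hD hZ with hDZ | hDZ
      · exfalso
        rw [hDZ] at hSD
        obtain ⟨t, htS, htx⟩ := cross_meet hcs hS hx2
        exact (hZs (hSD htS)) htx
      · rw [hDZ, compl_compl] at hTD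
        rcases half_pair hT hZ' with hTZ | hTZ
        · rw [hTZ] at hTD; exact hTD
        · exact (compl_both hx2ne hZ's ((hTZ ▸ hTD).trans hZs)).elim
    | succ j ih =>
      intro Z Z' hZ hZs hZ' hZ's
      obtain ⟨h1, h2, h3, S, T, D, hS, hT, hD, hSD, hTD⟩ := hchain (s + 1 + j)
      have hncn : ¬ Crosses x (c (s + 1 + j)) := hgt _ (by omega)
      obtain ⟨Zn, hZn, hZns⟩ := hbad _ hncn
      rcases half_pair hD hZ with hDZ | hDZ
      · exfalso
        rw [hDZ] at hSD
        have hSs : S ⊆ x2ᶜ := fun t ht => hZs (hSD ht)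
        have hSZn : S = Zn := by
          rcases half_pair hS hZn with h | h
          · exact h
          · exact (compl_both hx2ne hZns (h ▸ hSs)).elim
        have hZZn : Z ⊆ Zn := ih Zn Z hZn hZns hZ hZs
        have hZnZ : Zn ⊆ Z := hSZn ▸ hSD
        exact hne_half (c (s + 1 + (j + 1))) (c (s + 1 + j)) Z Zn
          (hU1W (hcU _)) (hU1W (hcU _))
          (fun h => by have := hcinj h; omega) hZ hZn
          (Subset.antisymm hZZn hZnZ)
      · rw [hDZ, compl_compl] at hTD
        rcases half_pair hT hZ' with hTZ | hTZ
        · rw [hTZ] at hTD; exact hTD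
        · exact (compl_both hx2ne hZ's ((hTZ ▸ hTD).trans hZs)).elim
  -- main argument
  intro u hu v hv w hwW hsep
  have huV : u ∈ V := hu.1.1
  have huU1 : u ∉ U1 := hu.1.2
  have hvV : v ∈ V := hv.1.1
  have hvU1 : v ∉ U1 := hv.1.2
  have hwV : w ∈ V := hV.2.2.1 u huV v hvV w hwW hsep
  have hKuinf : ¬ {a ∈ U1 | ¬ Crosses u a}.Finite := fun hf => hu.2 ⟨⟨huV, huU1⟩, hf⟩
  have hKvinf : ¬ {a ∈ U1 | ¬ Crosses v a}.Finite := fun hf => hv.2 ⟨⟨hvV, hvU1⟩, hf⟩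
  obtain ⟨huv, huwne, hvwne, u1, v1, w1, hu1, hv1, hw1, hsub1, hsub2⟩ := hsep
  have hw1c : w1ᶜ = w ∨ w1ᶜ = wᶜ := by
    rcases hw1 with rfl | rfl
    · exact Or.inr rfl
    · exact Or.inl (compl_compl w)
  have hu1c : u1ᶜ = u ∨ u1ᶜ = uᶜ := by
    rcases hu1 with rfl | rfl
    · exact Or.inr rfl
    · exact Or.inl (compl_compl u)
  have hv1c : v1ᶜ = v ∨ v1ᶜ = vᶜ := by
    rcases hv1 with rfl | rfl
    · exact Or.inr rfl
    · exact Or.inl (compl_compl v)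
  rcases dich u u1 (hV.1 huV) huU1 hu1 with hDu | hDu
  · -- every non-crosser of u in U1 has a halfspace inside u1 ⊆ w1
    refine ⟨⟨hwV, ?_⟩, ?_⟩
    · -- w ∉ U1
      intro hwU1
      have hncuw : ¬ Crosses u w :=
        not_crosses_of hw1c hu1c (compl_subset_compl.mpr hsub1)
      obtain ⟨Z, hZ, hZs⟩ := hDu w hwU1 hncuw
      rcases half_pair hZ hw1 with hZw | hZw
      · rw [hZw] at hZs
        exact hne_half u w u1 w1 (hV.1 huV) hwW huwne hu1 hw1
          (Subset.antisymm hsub1 hZs)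
      · have hww : w1ᶜ ⊆ w1 := (hZw ▸ hZs).trans hsub1
        obtain ⟨t, ht⟩ := hhalf_ne w w1ᶜ hwW hw1c
        exact ht (hww ht)
    · -- w ∉ V1plus
      intro hwP
      apply hKuinf
      refine hwP.2.subset fun a ha => ⟨ha.1, ?_⟩
      obtain ⟨Z, hZ, hZs⟩ := hDu a ha.1 ha.2
      exact not_crosses_of hZ hw1 (hZs.trans hsub1)
  · rcases dich v v1 (hV.1 hvV) hvU1 hv1 with hDv | hDv
    · -- every non-crosser of v in U1 has a halfspace inside v1 ⊆ w1ᶜ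
      refine ⟨⟨hwV, ?_⟩, ?_⟩
      · -- w ∉ U1
        intro hwU1
        have hsub2' : w1 ⊆ v1ᶜ := fun t ht htv => hsub2 htv ht
        have hncvw : ¬ Crosses v w := not_crosses_of hw1 hv1c hsub2'
        obtain ⟨Z, hZ, hZs⟩ := hDv w hwU1 hncvw
        rcases half_pair hZ hw1 with hZw | hZw
        · rw [hZw] at hZs
          obtain ⟨t, ht⟩ := hhalf_ne w w1 hwW hw1
          exact hsub2 (hZs ht) ht
        · exact hne_half v w v1 w1ᶜ (hV.1 hvV) hwW hvwne hv1 hw1c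
            (Subset.antisymm hsub2 (hZw ▸ hZs))
      · -- w ∉ V1plus
        intro hwP
        apply hKvinf
        refine hwP.2.subset fun a ha => ⟨ha.1, ?_⟩
        obtain ⟨Z, hZ, hZs⟩ := hDv a ha.1 ha.2
        exact not_crosses_of hZ hw1c (hZs.trans hsub2)
    · -- bad case: impossible
      exfalso
      have hu1ne : u1.Nonempty := hhalf_ne u u1 (hV.1 huV) hu1
      have hv1ne : v1.Nonempty := hhalf_ne v v1 (hV.1 hvV) hv1
      have hYZ : ∀ a ∈ U1, ∀ Z Y : Set X, (Z = a ∨ Z = aᶜ) → Z ⊆ u1ᶜ →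
          (Y = a ∨ Y = aᶜ) → Y ⊆ v1ᶜ → Y = Zᶜ := by
        intro a haU Z Y hZ hZs hY hYs
        rcases half_pair hY hZ with hYZ2 | h
        · exfalso
          rw [hYZ2] at hYs
          apply hV.2.2.2.2
          refine ⟨u, huV, v, hvV, a, hU1V haU, huv,
            fun h => huU1 (by rw [h]; exact haU),
            fun h => hvU1 (by rw [h]; exact haU),
            u1, v1, Z, hu1, hv1, hZ, ?_, ?_, ?_⟩
          · exact Set.disjoint_left.mpr fun t htu htv => (hsub2 htv) (hsub1 htu)
          · exact Set.disjoint_left.mpr fun t htu htz => (hZs htz) htu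
          · exact Set.disjoint_left.mpr fun t htv htz => (hYs htz) htv
        · exact h
      obtain ⟨s, hcs, hsmax⟩ := maxcross u u1 huV huU1 hu1 hKuinf hDu
      obtain ⟨r, hcr, hrmax⟩ := maxcross v v1 hvV hvU1 hv1 hKvinf hDv
      obtain ⟨k, hks, hkr⟩ : ∃ k, s ≤ k ∧ r ≤ k :=
        ⟨max s r, le_max_left s r, le_max_right s r⟩
      have hk1u : ¬ Crosses u (c (k + 1)) := hsmax _ (by omega)
      have hk2u : ¬ Crosses u (c (k + 2)) := hsmax _ (by omega)
      have hk1v : ¬ Crosses v (c (k + 1)) := hrmax _ (by omega)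
      have hk2v : ¬ Crosses v (c (k + 2)) := hrmax _ (by omega)
      obtain ⟨Z1, hZ1, hZ1s⟩ := hDu _ (hcU (k + 1)) hk1u
      obtain ⟨Z2, hZ2, hZ2s⟩ := hDu _ (hcU (k + 2)) hk2u
      obtain ⟨Y1, hY1, hY1s⟩ := hDv _ (hcU (k + 1)) hk1v
      obtain ⟨Y2, hY2, hY2s⟩ := hDv _ (hcU (k + 2)) hk2v
      have hY1Z : Y1 = Z1ᶜ := hYZ _ (hcU (k + 1)) Z1 Y1 hZ1 hZ1s hY1 hY1s
      have hY2Z : Y2 = Z2ᶜ := hYZ _ (hcU (k + 2)) Z2 Y2 hZ2 hZ2s hY2 hY2s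
      have hmu := mono u u1 hu1 hu1ne (fun n hn => hDu _ (hcU n) hn) s hcs hsmax
      have hmv := mono v v1 hv1 hv1ne (fun n hn => hDv _ (hcU n) hn) r hcr hrmax
      have h21 : Z2 ⊆ Z1 := by
        have e1 : s + 1 + (k - s) = k + 1 := by omega
        have e2 : s + 1 + (k - s) + 1 = k + 2 := by omega
        refine hmu (k - s) Z1 Z2 ?_ hZ1s ?_ hZ2s
        · rw [e1]; exact hZ1
        · rw [e2]; exact hZ2
      have h12 : Z1 ⊆ Z2 := by
        have e1 : r + 1 + (k - r) = k + 1 := by omega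
        have e2 : r + 1 + (k - r) + 1 = k + 2 := by omega
        have hYmono : Y2 ⊆ Y1 := by
          refine hmv (k - r) Y1 Y2 ?_ hY1s ?_ hY2s
          · rw [e1]; exact hY1
          · rw [e2]; exact hY2
        rw [hY1Z, hY2Z] at hYmono
        exact compl_subset_compl.mp hYmono
      exact hne_half (c (k + 1)) (c (k + 2)) Z1 Z2 (hU1W (hcU _)) (hU1W (hcU _))
        (fun h => by have := hcinj h; omega) hZ1 hZ2 (Subset.antisymm h12 h21)
end

section
/- In the setup below, the set V₁⁺ is inseparable. -/
open Set

variable {X : Type*}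

lemma inter_compl_empty_of_subset {A B : Set X} (h : A ⊆ B) : A ∩ Bᶜ = ∅ := by
  rw [← Set.diff_eq]
  exact Set.diff_eq_empty.mpr h

lemma cross_symm {h k : Set X} (hc : Crosses h k) : Crosses k h := by
  obtain ⟨a, b, d, e⟩ := hc
  exact ⟨by rwa [inter_comm] at a, by rwa [inter_comm] at d,
    by rwa [inter_comm] at b, by rwa [inter_comm] at e⟩

lemma cross_quad {h k h' k' : Set X} (hc : Crosses h k)
    (hh : h' = h ∨ h' = hᶜ) (hk : k' = k ∨ k' = kᶜ) : (h' ∩ k').Nonempty := by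
  obtain ⟨a, b, d, e⟩ := hc
  rcases hh with rfl | rfl <;> rcases hk with rfl | rfl <;> assumption

lemma not_cross_of_quad_empty {h k h' k' : Set X}
    (hh : h' = h ∨ h' = hᶜ) (hk : k' = k ∨ k' = kᶜ) (he : h' ∩ k' = ∅) :
    ¬ Crosses h k := fun hc => (cross_quad hc hh hk).ne_empty he

lemma halfspace_eq {a b A : Set X} (hA : A = a ∨ A = aᶜ) (hB : A = b ∨ A = bᶜ) :
    a = b ∨ a = bᶜ := by
  rcases hA with rfl | h <;> rcases hB with h' | h'
  · exact Or.inl h'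
  · exact Or.inr h'
  · right; rw [← h', h, compl_compl]
  · left; exact compl_injective (h.symm.trans h')

lemma halfspace_rel {a A B : Set X} (hA : A = a ∨ A = aᶜ) (hB : B = a ∨ B = aᶜ) :
    A = B ∨ A = Bᶜ := by
  rcases hA with rfl | h <;> rcases hB with h' | h'
  · exact Or.inl h'.symm
  · right; rw [h', compl_compl]
  · right; rw [h, h']
  · left; rw [h, h']

lemma compl_halfspace_s11 {a A : Set X} (hA : A = a ∨ A = aᶜ) :
    Aᶜ = a ∨ Aᶜ = aᶜ := by
  rcases hA with rfl | rfl
  · exact Or.inr rfl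
  · exact Or.inl (compl_compl a)

lemma cross_of_separates {w u v a : Set X} (hs : Separates w u v)
    (hau : Crosses a u) (hav : Crosses a v) : Crosses a w := by
  obtain ⟨-, -, -, u', v', w', hu', hv', hw', h1, h2⟩ := hs
  have q1 : (a ∩ u').Nonempty := cross_quad hau (Or.inl rfl) hu'
  have q2 : (aᶜ ∩ u').Nonempty := cross_quad hau (Or.inr rfl) hu'
  have q3 : (a ∩ v').Nonempty := cross_quad hav (Or.inl rfl) hv'
  have q4 : (aᶜ ∩ v').Nonempty := cross_quad hav (Or.inr rfl) hv'
  rcases hw' with rfl | hww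
  · exact ⟨q1.mono (inter_subset_inter_right a h1),
      q3.mono (inter_subset_inter_right a h2),
      q2.mono (inter_subset_inter_right aᶜ h1),
      q4.mono (inter_subset_inter_right aᶜ h2)⟩
  · subst hww
    rw [compl_compl] at h2
    exact ⟨q3.mono (inter_subset_inter_right a h2),
      q1.mono (inter_subset_inter_right a h1),
      q4.mono (inter_subset_inter_right aᶜ h2),
      q2.mono (inter_subset_inter_right aᶜ h1)⟩

lemma range_subset_closure (W : Set (Set X)) (C : Set (Set X)) :
    C ⊆ insepClosure W C := fun a ha S hS => hS.1 ha

/-- No wall in the inseparable closure of a chain crosses infinitely many chain terms. -/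
lemma chain_no_cofinal_cross (W : Set (Set X))
    (hWwall : ∀ h ∈ W, IsWall h) (hWadm : Admissible W)
    (c : ℕ → Set X) (hc : IsChainSeq c) (hcW : ∀ n, c n ∈ W)
    (w : Set X) (hw : w ∈ insepClosure W (Set.range c))
    (hcr : {n | Crosses w (c n)}.Infinite) : False := by
  obtain ⟨hinj, hsepn⟩ := hc
  -- choose witnesses for the chain separations
  choose u' v' w' hu' hv' hw' hsub1 hsub2 using fun n => (hsepn n).2.2.2
  have hne : ∀ n (A : Set X), A = c n ∨ A = (c n)ᶜ → A.Nonempty := by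
    intro n A hA
    obtain ⟨h1, h2⟩ := hWwall (c n) (hcW n)
    rcases hA with rfl | rfl <;> assumption
  have hdist : ∀ m n : ℕ, m ≠ n → c m ≠ c n ∧ c m ≠ (c n)ᶜ :=
    fun m n hmn => ⟨fun h => hmn (hinj h),
      hWadm (c m) (hcW m) (c n) (hcW n) (fun h => hmn (hinj h))⟩
  -- the chosen halfspaces are monotone
  have hstep : ∀ n, w' n ⊆ w' (n + 1) := by
    intro n
    rcases halfspace_rel (hu' (n + 1)) (hw' n) with h | h
    · exact h ▸ hsub1 (n + 1)
    · -- u' (n+1) = (w' n)ᶜ : impossible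
      exfalso
      have h1 : (w' n)ᶜ ⊆ w' (n + 1) := h ▸ hsub1 (n + 1)
      rcases halfspace_rel (hv' n) (hw' (n + 1)) with h2 | h2
      · -- v' n = w' (n+1), so v' n = (w' n)ᶜ, a halfspace of c (n+1)
        have hvw : v' n = (w' n)ᶜ :=
          subset_antisymm (hsub2 n) (h2 ▸ h1)
        have : c (n + 2) = c (n + 1) ∨ c (n + 2) = (c (n + 1))ᶜ :=
          halfspace_eq (hv' n) (hvw ▸ compl_halfspace_s11 (hw' n))
        rcases this with h3 | h3
        · exact (hdist (n + 2) (n + 1) (by omega)).1 h3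
        · exact (hdist (n + 2) (n + 1) (by omega)).2 h3
      · -- v' n = (w' (n+1))ᶜ, so v' n ⊆ w' n and v' n ⊆ (w' n)ᶜ
        have h3 : v' n ⊆ w' n := by
          intro x hx
          by_contra hxw
          exact (h2 ▸ hx : x ∈ (w' (n+1))ᶜ) (h1 hxw)
        obtain ⟨x, hx⟩ := hne (n + 2) (v' n) (hv' n)
        exact (hsub2 n hx) (h3 hx)
  -- the sequence K of halfspaces
  set K : ℕ → Set X := fun n => Nat.casesOn n (u' 0) (fun m => w' m) with hK
  have hKhs : ∀ n, K n = c n ∨ K n = (c n)ᶜ := by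
    intro n; cases n with
    | zero => exact hu' 0
    | succ m => exact hw' m
  have hKmono : Monotone K := by
    apply monotone_nat_of_le_succ
    intro n; cases n with
    | zero => exact hsub1 0
    | succ m => exact hstep m
  have hKne : ∀ n, (K n).Nonempty := fun n => hne n _ (hKhs n)
  have hKcne : ∀ n, (K n)ᶜ.Nonempty := fun n => hne n _ (compl_halfspace_s11 (hKhs n))
  -- chain terms do not cross each other
  have noncross : ∀ m n : ℕ, m < n → ¬ Crosses (c m) (c n) := by
    intro m n hmn
    refine not_cross_of_quad_empty (hKhs m) (compl_halfspace_s11 (hKhs n)) ?_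
    exact inter_compl_empty_of_subset (hKmono hmn.le)
  -- the set of walls between two chain terms (or chain terms) is inseparable
  set T : Set (Set X) :=
    {a | a ∈ W ∧ (a ∈ Set.range c ∨ ∃ i j, Separates a (c i) (c j))} with hT
  have hTinsep : InseparableIn W T := by
    intro a ha b hb x hxW hsep
    obtain ⟨-, -, -, a', b', x', ha', hb', hx', hs1, hs2⟩ := hsep
    -- from a obtain a chain halfspace inside x'
    have hγ : ∀ (d : Set X), d ∈ T → ∀ d' : Set X, (d' = d ∨ d' = dᶜ) →
        ∃ p γ, (γ = c p ∨ γ = (c p)ᶜ) ∧ γ ⊆ d' := by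
      rintro d ⟨-, hd⟩ d' hd'
      rcases hd with ⟨p, rfl⟩ | ⟨i, j, hsd⟩
      · exact ⟨p, d', (by tauto), subset_rfl⟩
      · obtain ⟨-, -, -, gi, gj, d'', hgi, hgj, hd'', ht1, ht2⟩ := hsd
        rcases halfspace_rel hd' hd'' with h | h
        · exact ⟨i, gi, hgi, h ▸ ht1⟩
        · exact ⟨j, gj, hgj, h ▸ ht2⟩
    obtain ⟨p, γ, hγhs, hγx⟩ := hγ a ha a' ha'
    obtain ⟨q, δ, hδhs, hδx⟩ := hγ b hb b' hb'
    have hγδ : γ ⊆ x' := hγx.trans hs1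
    have hδδ : δ ⊆ x'ᶜ := hδx.trans hs2
    by_cases hxr : x ∈ Set.range c
    · exact ⟨hxW, Or.inl hxr⟩
    by_cases hpq : p = q
    · subst hpq
      exfalso
      rcases halfspace_rel hδhs hγhs with h | h
      · obtain ⟨z, hz⟩ := hne p γ hγhs
        exact (hδδ (h ▸ hz)) (hγδ hz)
      · -- δ = γᶜ hence x' = γ, so x is (up to complement) a chain wall
        have hxγ : x' = γ := by
          refine subset_antisymm ?_ hγδ
          intro z hz
          by_contra hzg
          exact hδδ (h ▸ (hzg : z ∈ γᶜ)) hz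
        have : x = c p ∨ x = (c p)ᶜ :=
          halfspace_eq (a := x) (A := x') (by tauto) (hxγ ▸ hγhs)
        rcases this with h3 | h3
        · exact hxr ⟨p, h3.symm⟩
        · exact hWadm x hxW (c p) (hcW p) (fun h4 => hxr ⟨p, h4.symm⟩) h3
    · refine ⟨hxW, Or.inr ⟨p, q, (hdist p q hpq).1, ?_, ?_, γ, δ, x', hγhs, hδhs, (by tauto),
        hγδ, hδδ⟩⟩
      · exact fun h => hxr ⟨p, h⟩
      · exact fun h => hxr ⟨q, h⟩
  -- the closure is contained in T
  have hwT : w ∈ T := by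
    have : insepClosure W (Set.range c) ⊆ T := by
      apply Set.sInter_subset_of_mem
      refine ⟨fun a ⟨p, hp⟩ => ⟨hp ▸ hcW p, Or.inl ⟨p, hp⟩⟩, fun a ha => ha.1, hTinsep⟩
    exact this hw
  -- final case analysis
  rcases hwT.2 with ⟨m, hm⟩ | ⟨i, j, hsw⟩
  · obtain ⟨n, hn, hmn⟩ := hcr.exists_gt m
    exact noncross m n hmn (hm ▸ hn)
  · obtain ⟨-, -, -, γ, δ, x', hγhs, hδhs, hx', hs1, hs2⟩ := hsw
    have hγK : γ = K i ∨ γ = (K i)ᶜ := halfspace_rel hγhs (hKhs i)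
    have hδK : δ = K j ∨ δ = (K j)ᶜ := halfspace_rel hδhs (hKhs j)
    rcases hγK with rfl | rfl <;> rcases hδK with rfl | rfl
    · -- both positive: K (min i j) in both, contradiction
      obtain ⟨z, hz⟩ := hKne (min i j)
      exact hs2 (hKmono (min_le_right i j) hz) (hs1 (hKmono (min_le_left i j) hz))
    · -- x' ⊆ K j, so w does not cross c n for n > j
      have hx'K : x' ⊆ K j := fun z hz => by
        by_contra h; exact hs2 (h : z ∈ (K j)ᶜ) hz
      obtain ⟨n, hn, hjn⟩ := hcr.exists_gt j
      refine not_cross_of_quad_empty hx' (compl_halfspace_s11 (hKhs n)) ?_ hn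
      exact inter_compl_empty_of_subset (hx'K.trans (hKmono hjn.le))
    · -- x'ᶜ ⊆ K i, so w does not cross c n for n > i
      have hx'K : x'ᶜ ⊆ K i := fun z hz => by
        by_contra h; exact hz (hs1 (h : z ∈ (K i)ᶜ))
      obtain ⟨n, hn, hin⟩ := hcr.exists_gt i
      refine not_cross_of_quad_empty (compl_halfspace_s11 hx') (compl_halfspace_s11 (hKhs n)) ?_ hn
      exact inter_compl_empty_of_subset (hx'K.trans (hKmono hin.le))
    · -- both negative: K (max i j)ᶜ in both, contradiction
      obtain ⟨z, hz⟩ := hKcne (max i j)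
      have h1 : z ∈ (K i)ᶜ := fun h => hz (hKmono (le_max_left i j) h)
      have h2 : z ∈ (K j)ᶜ := fun h => hz (hKmono (le_max_right i j) h)
      exact hs2 h2 (hs1 h1)

/-- The set `V₁⁺` is inseparable. -/
theorem v1plus_inseparable (W : Set (Set X))
    (hWc : W.Countable) (hWwall : ∀ h ∈ W, IsWall h)
    (hWadm : Admissible W) (hWnic : NoInfCross W)
    (V : Set (Set X)) (hV : IsUBS W V)
    (c : ℕ → Set X) (hc : IsChainSeq c) (hcV : ∀ n, c n ∈ V)
    (hinext : InextensibleIn V c)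
    (hU1min : MinUBS W (insepClosure W (Set.range c)))
    (hU1V : insepClosure W (Set.range c) ⊆ V) :
    InseparableIn W (V1plus W V c) := by
  intro u hu v hv w hwW hsep
  obtain ⟨⟨huV, huU⟩, huF⟩ := hu
  obtain ⟨⟨hvV, hvU⟩, hvF⟩ := hv
  have hwV : w ∈ V := hV.2.2.1 u huV v hvV w hwW hsep
  have hFw : {a ∈ insepClosure W (Set.range c) | ¬ Crosses w a}.Finite := by
    refine (huF.union hvF).subset ?_
    rintro a ⟨haU, hna⟩
    by_cases h1 : Crosses u a
    · by_cases h2 : Crosses v a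
      · exact absurd (cross_symm (cross_of_separates hsep (cross_symm h1) (cross_symm h2))) hna
      · exact Or.inr ⟨haU, h2⟩
    · exact Or.inl ⟨haU, h1⟩
  have hwn : w ∉ insepClosure W (Set.range c) := by
    intro hwU
    refine chain_no_cofinal_cross W hWwall hWadm c hc (fun n => hV.1 (hcV n)) w hwU ?_
    have hpre : {n | ¬ Crosses w (c n)}.Finite := by
      have hsub : {n | ¬ Crosses w (c n)} ⊆
          c ⁻¹' {a ∈ insepClosure W (Set.range c) | ¬ Crosses w a} :=
        fun n hn => ⟨range_subset_closure W (Set.range c) ⟨n, rfl⟩, hn⟩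
      exact (hFw.preimage hc.1.injOn).subset hsub
    have h2 := hpre.infinite_compl
    simpa [Set.compl_setOf, not_not] using h2
  exact ⟨⟨hwV, hwn⟩, hFw⟩
end
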